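/- Let A be an arena with n vertices and recharge weight function w, and let W be the largest absolute weight in the image of w. If there exists a capacity cap ∈ ℕ such that Player 0 wins (A, Recharge(w, cap)), then Player 0 wins (A, Recharge(w, 3·(n−1)·W)), and she wins the latter game with a finite-state winning strategy of size three. -/

import Mathlib

/-- An arena: a directed graph without terminal vertices, a set `V0` of Player 0's
vertices (Player 1 controls the complement), and an initial vertex. -/
structure Arena (V : Type) where
  V0 : Set V
  E : V → V → Prop
  vI : V
  succ : ∀ v, ∃ v', E v v'

/-- A play: an infinite path starting in the initial vertex. -/
def Arena.Play {V : Type} (A : Arena V) (ρ : ℕ → V) : Prop :=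
  ρ 0 = A.vI ∧ ∀ n, A.E (ρ n) (ρ (n + 1))

/-- The play prefix `ρ 0 ⋯ ρ n` as a list. -/
def prefixList {V : Type} (ρ : ℕ → V) (n : ℕ) : List V :=
  (List.range (n + 1)).map ρ

/-- A strategy for the player controlling the vertices in `p`. -/
def Arena.IsStrategy {V : Type} (A : Arena V) (p : Set V) (σ : List V → V) : Prop :=
  ∀ (h : List V) (v : V), v ∈ p → A.E v (σ (h ++ [v]))

/-- Consistency of a play with a strategy of the player controlling `p`. -/
def Arena.ConsistentWith {V : Type} (A : Arena V) (p : Set V) (σ : List V → V) (ρ : ℕ → V) : Prop :=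
  ∀ n, ρ n ∈ p → ρ (n + 1) = σ (prefixList ρ n)

/-- `σ` is a winning strategy for the player controlling `p` with objective `Obj`. -/
def Arena.WinningStrategy {V : Type} (A : Arena V) (p : Set V) (Obj : Set (ℕ → V))
    (σ : List V → V) : Prop :=
  A.IsStrategy p σ ∧ ∀ ρ, A.Play ρ → A.ConsistentWith p σ ρ → ρ ∈ Obj

/-- Player 0 wins the game `(A, Win)`. -/
def Arena.Player0Wins {V : Type} (A : Arena V) (Win : Set (ℕ → V)) : Prop :=
  ∃ σ, A.WinningStrategy A.V0 Win σ

/-- `h` is a finite play prefix consistent with the strategy `σ` of the player controlling `p`. -/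
def Arena.FinPrefix {V : Type} (A : Arena V) (p : Set V) (σ : List V → V) (h : List V) : Prop :=
  ∃ ρ n, A.Play ρ ∧ A.ConsistentWith p σ ρ ∧ h = prefixList ρ n

/-- A positional strategy only depends on the last vertex. -/
def Positional {X : Type} (σ : List X → X) : Prop :=
  ∀ (h : List X) (v : X), σ (h ++ [v]) = σ [v]

/-- The energy level of the play prefix `ρ 0 ⋯ ρ n` is `EL w ρ n`:
the sum of the weights of its `n` edges. -/
def EL {V : Type} (w : V → V → ℤ) (ρ : ℕ → V) (n : ℕ) : ℤ :=
  ∑ i ∈ Finset.range n, w (ρ i) (ρ (i + 1))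

/-- The energy level of a finite play prefix given as a list. -/
def ELl {V : Type} (w : V → V → ℤ) : List V → ℤ
  | [] => 0
  | [_] => 0
  | a :: b :: l => w a b + ELl w (b :: l)

/-- The average accumulated energy of the first `n` prefixes. -/
noncomputable def avgEL {V : Type} (w : V → V → ℤ) (ρ : ℕ → V) (n : ℕ) : ℝ :=
  (∑ i ∈ Finset.range n, (EL w ρ i : ℝ)) / (n : ℝ)

/-- The lower-bounded energy objective. -/
def EnergyL {V : Type} (w : V → V → ℤ) : Set (ℕ → V) :=
  {ρ | ∀ n, 0 ≤ EL w ρ n}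

/-- The lower- and upper-bounded energy objective. -/
def EnergyLU {V : Type} (w : V → V → ℤ) (cap : ℕ) : Set (ℕ → V) :=
  {ρ | ∀ n, 0 ≤ EL w ρ n ∧ EL w ρ n ≤ (cap : ℤ)}

/-- The average-energy objective: limsup of the averages is at most `t`. -/
def AvgE {V : Type} (w : V → V → ℤ) (t : ℝ) : Set (ℕ → V) :=
  {ρ | Filter.limsup (fun n => (avgEL w ρ n : EReal)) Filter.atTop ≤ (t : EReal)}

/-- The lower-bounded average-energy objective. -/
def AvgEnergyL {V : Type} (w : V → V → ℤ) (t : ℝ) : Set (ℕ → V) :=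
  EnergyL w ∩ AvgE w t

/-- The mean-payoff objective. -/
def MP {V : Type} (w : V → V → ℤ) (t : ℝ) : Set (ℕ → V) :=
  {ρ | Filter.limsup (fun n => (((EL w ρ n : ℝ) / (n : ℝ)) : EReal)) Filter.atTop ≤ (t : EReal)}

/-- A memory structure: initial memory state and update along edges. -/
structure Mem (V M : Type) where
  mI : M
  upd : M → V → V → M

/-- Tracking the memory state along a play. -/
def Mem.track {V M : Type} (mem : Mem V M) (ρ : ℕ → V) : ℕ → M
  | 0 => mem.mI
  | n + 1 => mem.upd (Mem.track mem ρ n) (ρ n) (ρ (n + 1))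

def Mem.runAux {V M : Type} (mem : Mem V M) : M → List V → M
  | m, [] => m
  | m, [_] => m
  | m, a :: b :: l => Mem.runAux mem (mem.upd m a b) (b :: l)

/-- `Upd⁺`: the memory state reached along a finite play prefix. -/
def Mem.run {V M : Type} (mem : Mem V M) (h : List V) : M :=
  Mem.runAux mem mem.mI h

/-- The strategy `σ` is implemented by the memory structure `mem`
(via some next-move function). -/
def Arena.ImplementedBy {V M : Type} (A : Arena V) (mem : Mem V M) (σ : List V → V) : Prop :=
  ∃ nxt : V → M → V, ∀ (h : List V) (v : V), σ (h ++ [v]) = nxt v (mem.run (h ++ [v]))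

/-- `σ` is a finite-state strategy of size `k`. -/
def Arena.FiniteStateOfSize {V : Type} (A : Arena V) (k : ℕ) (σ : List V → V) : Prop :=
  ∃ (M : Type) (inst : Fintype M) (mem : Mem V M),
    @Fintype.card M inst = k ∧ A.ImplementedBy mem σ

/-- The expanded arena `A × M`. -/
def Arena.expand {V M : Type} (A : Arena V) (mem : Mem V M) : Arena (V × M) where
  V0 := {p | p.1 ∈ A.V0}
  E := fun p q => A.E p.1 q.1 ∧ q.2 = mem.upd p.2 p.1 q.1
  vI := (A.vI, mem.mI)
  succ := fun p => by
    obtain ⟨v', h⟩ := A.succ p.1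
    exact ⟨(v', mem.upd p.2 p.1 v'), h, rfl⟩

/-- The extended play in `A × M` corresponding to a play in `A`. -/
def extendPlay {V M : Type} (mem : Mem V M) (ρ : ℕ → V) : ℕ → V × M :=
  fun n => (ρ n, Mem.track mem ρ n)

/-- `(A, Win) ≤_M (A × M, Win')`. -/
def Reduces {V M : Type} (A : Arena V) (mem : Mem V M) (Win : Set (ℕ → V))
    (Win' : Set (ℕ → V × M)) : Prop :=
  ∀ ρ, A.Play ρ → (ρ ∈ Win ↔ extendPlay mem ρ ∈ Win')

/-- A recharge weight function (`none` is the recharge label `R`) assigns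
non-positive weights to all (non-recharge) edges. -/
def RechargeWeights {V : Type} (A : Arena V) (w : V → V → Option ℤ) : Prop :=
  ∀ u v, A.E u v → ∀ k : ℤ, w u v = some k → k ≤ 0

/-- The recharge energy level of the prefix `ρ 0 ⋯ ρ n`: the capacity plus the
accumulated weight since the last `R`-edge. -/
def ELcap {V : Type} (w : V → V → Option ℤ) (cap : ℕ) (ρ : ℕ → V) : ℕ → ℤ
  | 0 => (cap : ℤ)
  | n + 1 =>
    match w (ρ n) (ρ (n + 1)) with
    | none => (cap : ℤ)
    | some k => ELcap w cap ρ n + k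

/-- The recharge objective. -/
def Recharge {V : Type} (w : V → V → Option ℤ) (cap : ℕ) : Set (ℕ → V) :=
  {ρ | ∀ n, 0 ≤ ELcap w cap ρ n}

/-- The average of the recharge energy levels of the first `n` prefixes. -/
noncomputable def avgELcap {V : Type} (w : V → V → Option ℤ) (cap : ℕ) (ρ : ℕ → V)
    (n : ℕ) : ℝ :=
  (∑ i ∈ Finset.range n, (ELcap w cap ρ i : ℝ)) / (n : ℝ)

/-- The average-bounded recharge objective. -/
def AvgRecharge {V : Type} (w : V → V → Option ℤ) (cap : ℕ) (t : ℝ) : Set (ℕ → V) :=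
  {ρ | Filter.limsup (fun n => (avgELcap w cap ρ n : EReal)) Filter.atTop ≤ (t : EReal)} ∩
    Recharge w cap

/-- The (max-)parity objective: the maximal color occurring infinitely often is even. -/
def ParityObj {V : Type} (Ω : V → ℕ) : Set (ℕ → V) :=
  {ρ | ∃ c, Even c ∧ {n | Ω (ρ n) = c}.Infinite ∧ ∀ d, {n | Ω (ρ n) = d}.Infinite → d ≤ c}

/-!
Treat the recharge game with capacity `c` as a safety game on positions (vertex, energy level),
whose winning region is a greatest fixed point. A winning strategy from `v_I` keeps every
reachable position inside this region; conversely, choosing at each vertex a move that is safe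
from its minimal safe energy level is a positional winning strategy, hence finite-state of any
positive size.

The minimal safe energy levels form a set of at most `n` naturals in which every positive level
has a smaller one at distance at most `W`, so all of them are at most `(n - 1)W`. Hence a reset to
any capacity `C ≥ (n - 1)W` lands inside the winning region, and the region for capacity `c` is
contained in the one for capacity `C`.
-/

theorem Finset.le_mul_card_sub_one_of_gaps_le {S : Finset ℕ} {W : ℕ}
    (hS : ∀ ℓ ∈ S, 0 < ℓ → ∃ ℓ' ∈ S, ℓ' < ℓ ∧ ℓ ≤ ℓ' + W) {ℓ : ℕ} (hℓ : ℓ ∈ S) :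
    ℓ ≤ W * (S.card - 1) := by
  have below : ∀ ℓ ∈ S, ℓ ≤ W * (S.filter (· < ℓ)).card := by
    intro ℓ
    induction ℓ using Nat.strong_induction_on with
    | _ ℓ ih =>
      intro hℓ
      rcases Nat.eq_zero_or_pos ℓ with rfl | hpos
      · exact Nat.zero_le _
      obtain ⟨ℓ', hℓ', hlt, hle⟩ := hS ℓ hℓ hpos
      have hsub : insert ℓ' (S.filter (· < ℓ')) ⊆ S.filter (· < ℓ) := by
        intro x hx
        simp only [Finset.mem_insert, Finset.mem_filter] at hx ⊢
        rcases hx with rfl | ⟨hx, hx'⟩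
        · exact ⟨hℓ', hlt⟩
        · exact ⟨hx, hx'.trans hlt⟩
      have hcard := Finset.card_le_card hsub
      rw [Finset.card_insert_of_notMem (by simp)] at hcard
      calc ℓ ≤ W * (S.filter (· < ℓ')).card + W := by linarith [ih ℓ' hlt hℓ']
        _ = W * ((S.filter (· < ℓ')).card + 1) := by ring
        _ ≤ W * (S.filter (· < ℓ)).card := Nat.mul_le_mul_left W hcard
  have hlt : (S.filter (· < ℓ)).card < S.card :=
    Finset.card_lt_card (Finset.filter_ssubset.mpr ⟨ℓ, hℓ, lt_irrefl ℓ⟩)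
  exact (below ℓ hℓ).trans (Nat.mul_le_mul_left W (by omega))

section Plays

variable {V : Type}

theorem prefixList_eq_append (ρ : ℕ → V) (n : ℕ) :
    prefixList ρ n = (List.range n).map ρ ++ [ρ n] := by
  simp [prefixList, List.range_succ]

theorem prefixList_succ (ρ : ℕ → V) (n : ℕ) :
    prefixList ρ (n + 1) = prefixList ρ n ++ [ρ (n + 1)] := by
  simp [prefixList, List.range_succ]

theorem prefixList_getLastD (ρ : ℕ → V) (n : ℕ) (d : V) : (prefixList ρ n).getLastD d = ρ n := by
  rw [prefixList_eq_append, List.getLastD_concat]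

theorem prefixList_congr {ρ ρ' : ℕ → V} {n : ℕ} (h : ∀ i ≤ n, ρ i = ρ' i) :
    prefixList ρ n = prefixList ρ' n :=
  List.map_congr_left fun i hi => h i (Nat.lt_succ_iff.mp (List.mem_range.mp hi))

variable (A : Arena V) (σ : List V → V)

open Classical in
noncomputable def Arena.followMove (l : List V) : V :=
  if l.getLastD A.vI ∈ A.V0 then σ l else (A.succ (l.getLastD A.vI)).choose

theorem Arena.followMove_append_singleton (hσ : A.IsStrategy A.V0 σ) (h : List V) (v : V) :
    A.E v (A.followMove σ (h ++ [v])) ∧ (v ∈ A.V0 → A.followMove σ (h ++ [v]) = σ (h ++ [v])) := by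
  have hlast : (h ++ [v]).getLastD A.vI = v := List.getLastD_concat
  unfold Arena.followMove
  by_cases hv : v ∈ A.V0
  · rw [if_pos (show (h ++ [v]).getLastD A.vI ∈ A.V0 by rwa [hlast])]
    exact ⟨hσ h v hv, fun _ => rfl⟩
  · rw [if_neg (show (h ++ [v]).getLastD A.vI ∉ A.V0 by rwa [hlast])]
    refine ⟨?_, fun h => absurd h hv⟩
    convert (A.succ ((h ++ [v]).getLastD A.vI)).choose_spec
    exact hlast.symm

noncomputable def Arena.followHistory (A : Arena V) (σ : List V → V) (g : ℕ → V) (N : ℕ) :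
    ℕ → List V
  | 0 => prefixList g N
  | k + 1 => A.followHistory σ g N k ++ [A.followMove σ (A.followHistory σ g N k)]

noncomputable def Arena.followPlay (g : ℕ → V) (N : ℕ) (i : ℕ) : V :=
  if i ≤ N then g i else A.followMove σ (A.followHistory σ g N (i - N - 1))

theorem Arena.prefixList_followPlay (g : ℕ → V) (N k : ℕ) :
    prefixList (A.followPlay σ g N) (N + k) = A.followHistory σ g N k := by
  induction k with
  | zero => exact prefixList_congr fun i hi => if_pos hi
  | succ k ih =>
    rw [← add_assoc, prefixList_succ, ih, Arena.followPlay, if_neg (by omega),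
      show N + k + 1 - N - 1 = k by omega]
    rfl

theorem Arena.exists_consistent_extension (hσ : A.IsStrategy A.V0 σ) (g : ℕ → V) (N : ℕ)
    (hE : ∀ i < N, A.E (g i) (g (i + 1)))
    (hcons : ∀ i < N, g i ∈ A.V0 → g (i + 1) = σ (prefixList g i)) :
    ∃ ρ, (∀ i, A.E (ρ i) (ρ (i + 1))) ∧ A.ConsistentWith A.V0 σ ρ ∧ ∀ i ≤ N, ρ i = g i := by
  set ρ := A.followPlay σ g N
  have hprefix : ∀ i ≤ N, ρ i = g i := fun i hi => if_pos hi
  have hfollow : ∀ i, N ≤ i →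
      A.E (ρ i) (ρ (i + 1)) ∧ (ρ i ∈ A.V0 → ρ (i + 1) = σ (prefixList ρ i)) := by
    intro i hi
    obtain ⟨k, rfl⟩ := Nat.exists_eq_add_of_le hi
    have hnext : ρ (N + k + 1) = A.followMove σ (prefixList ρ (N + k)) := by
      rw [Arena.prefixList_followPlay]
      exact if_neg (by omega) |>.trans (by rw [show N + k + 1 - N - 1 = k by omega])
    rw [hnext, prefixList_eq_append]
    exact A.followMove_append_singleton σ hσ _ _
  refine ⟨ρ, fun i => ?_, fun i => ?_, hprefix⟩
  all_goals rcases lt_or_ge i N with hi | hi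
  · rw [hprefix i hi.le, hprefix (i + 1) hi]
    exact hE i hi
  · exact (hfollow i hi).1
  · rw [hprefix i hi.le, hprefix (i + 1) hi, prefixList_congr fun j hj => hprefix j (by omega)]
    exact hcons i hi
  · exact (hfollow i hi).2

theorem Arena.exists_consistent_play (hσ : A.IsStrategy A.V0 σ) :
    ∃ ρ, A.Play ρ ∧ A.ConsistentWith A.V0 σ ρ := by
  obtain ⟨ρ, hE, hcons, h0⟩ :=
    A.exists_consistent_extension σ hσ (fun _ => A.vI) 0 (by simp) (by simp)
  exact ⟨ρ, ⟨h0 0 le_rfl, hE⟩, hcons⟩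

theorem Arena.exists_consistent_deviation (hσ : A.IsStrategy A.V0 σ) {ρ : ℕ → V}
    (hρ : A.Play ρ) (hcons : A.ConsistentWith A.V0 σ ρ) {n : ℕ} (hn : ρ n ∉ A.V0) {v : V}
    (hv : A.E (ρ n) v) :
    ∃ ρ', A.Play ρ' ∧ A.ConsistentWith A.V0 σ ρ' ∧ (∀ i ≤ n, ρ' i = ρ i) ∧ ρ' (n + 1) = v := by
  set g := Function.update ρ (n + 1) v
  have hgv : g (n + 1) = v := Function.update_self _ _ _
  have hg : ∀ i ≤ n, g i = ρ i := fun i hi => Function.update_of_ne (by omega) _ _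
  obtain ⟨ρ', hE, hcons', hρ'⟩ := A.exists_consistent_extension σ hσ g (n + 1)
    (fun i hi => by
      rcases Nat.lt_succ_iff_lt_or_eq.mp hi with hi | rfl
      · rw [hg i hi.le, hg (i + 1) hi]
        exact hρ.2 i
      · rw [hg i le_rfl, hgv]
        exact hv)
    (fun i hi hgi => by
      rcases Nat.lt_succ_iff_lt_or_eq.mp hi with hi | rfl
      · rw [hg i hi.le] at hgi
        rw [hg (i + 1) hi, prefixList_congr fun j hj => hg j (by omega)]
        exact hcons i hgi
      · exact absurd (hg i le_rfl ▸ hgi) hn)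
  refine ⟨ρ', ⟨?_, hE⟩, hcons', fun i hi => (hρ' i (by omega)).trans (hg i hi), ?_⟩
  · rw [hρ' 0 (by omega), hg 0 (by omega)]
    exact hρ.1
  · rw [hρ' (n + 1) le_rfl, hgv]

theorem Arena.finiteStateOfSize_of_positional {σ : List V → V} (hσ : Positional σ) (k : ℕ) :
    A.FiniteStateOfSize (k + 1) σ :=
  ⟨Fin (k + 1), inferInstance, ⟨0, fun m _ _ => m⟩, Fintype.card_fin _,
    fun v _ => σ [v], fun h v => hσ h v⟩


theorem positional_comp_getLastD (s : V → V) (d : V) :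
    Positional fun l => s (l.getLastD d) := fun h v => by
  simp only [List.getLastD_concat]
  rfl

end Plays

section RechargeRegion

variable {V : Type} (A : Arena V) (w : V → V → Option ℤ)

def nextEnergy (c : ℕ) (u v : V) (e : ℤ) : ℤ :=
  match w u v with
  | none => c
  | some k => e + k

theorem ELcap_succ (c : ℕ) (ρ : ℕ → V) (n : ℕ) :
    ELcap w c ρ (n + 1) = nextEnergy w c (ρ n) (ρ (n + 1)) (ELcap w c ρ n) := rfl

theorem ELcap_congr (c : ℕ) {ρ ρ' : ℕ → V} {n : ℕ} (h : ∀ i ≤ n, ρ i = ρ' i) :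
    ELcap w c ρ n = ELcap w c ρ' n := by
  induction n with
  | zero => rfl
  | succ n ih =>
    rw [ELcap_succ, ELcap_succ, h n (by omega), h (n + 1) le_rfl, ih fun i hi => h i (by omega)]

theorem nextEnergy_mono (c : ℕ) (u v : V) {e e' : ℤ} (h : e ≤ e') :
    nextEnergy w c u v e ≤ nextEnergy w c u v e' := by
  unfold nextEnergy
  split <;> omega

def Arena.rechargeStep (c : ℕ) (S : Set (V × ℤ)) : Set (V × ℤ) :=
  {p | 0 ≤ p.2 ∧
    (p.1 ∈ A.V0 → ∃ v, A.E p.1 v ∧ (v, nextEnergy w c p.1 v p.2) ∈ S) ∧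
    (p.1 ∉ A.V0 → ∀ v, A.E p.1 v → (v, nextEnergy w c p.1 v p.2) ∈ S)}

theorem Arena.mem_rechargeStep_of_moves {c c' : ℕ} {S S' : Set (V × ℤ)} {u : V} {e e' : ℤ}
    (he' : 0 ≤ e')
    (hmove : ∀ v, A.E u v → (v, nextEnergy w c u v e) ∈ S → (v, nextEnergy w c' u v e') ∈ S')
    (h : (u, e) ∈ A.rechargeStep w c S) : (u, e') ∈ A.rechargeStep w c' S' := by
  obtain ⟨-, h0, h1⟩ := h
  refine ⟨he', fun hu => ?_, fun hu v hv => hmove v hv (h1 hu v hv)⟩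
  obtain ⟨v, hv, hS⟩ := h0 hu
  exact ⟨v, hv, hmove v hv hS⟩

def Arena.rechargeStepHom (c : ℕ) : Set (V × ℤ) →o Set (V × ℤ) where
  toFun := A.rechargeStep w c
  monotone' _ _ hS _ hp := A.mem_rechargeStep_of_moves w hp.1 (fun _ _ hv => hS hv) hp

/-- Player 0's winning region in the recharge game with capacity `c`, as a set of
positions (vertex, current energy level). -/
def Arena.rechargeRegion (c : ℕ) : Set (V × ℤ) :=
  OrderHom.gfp (A.rechargeStepHom w c)

variable {A w} {c : ℕ}

theorem Arena.mem_rechargeStep_of_mem_rechargeRegion {p : V × ℤ} (h : p ∈ A.rechargeRegion w c) :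
    p ∈ A.rechargeStep w c (A.rechargeRegion w c) :=
  (OrderHom.map_gfp (A.rechargeStepHom w c)).ge h

theorem Arena.subset_rechargeRegion {S : Set (V × ℤ)} (h : S ⊆ A.rechargeStep w c S) :
    S ⊆ A.rechargeRegion w c :=
  OrderHom.le_gfp (A.rechargeStepHom w c) h

theorem Arena.nonneg_of_mem_rechargeRegion {v : V} {e : ℤ} (h : (v, e) ∈ A.rechargeRegion w c) :
    0 ≤ e :=
  (A.mem_rechargeStep_of_mem_rechargeRegion h).1

theorem Arena.mem_rechargeRegion_of_le {v : V} {e e' : ℤ} (h : (v, e) ∈ A.rechargeRegion w c)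
    (he : e ≤ e') : (v, e') ∈ A.rechargeRegion w c := by
  have hsub : {p : V × ℤ | ∃ e ≤ p.2, (p.1, e) ∈ A.rechargeRegion w c} ⊆ A.rechargeRegion w c := by
    refine Arena.subset_rechargeRegion ?_
    rintro ⟨u, e'⟩ ⟨e, he, hu⟩
    exact A.mem_rechargeStep_of_moves w ((A.nonneg_of_mem_rechargeRegion hu).trans he)
      (fun v _ hv => ⟨_, nextEnergy_mono w c u v he, hv⟩)
      (A.mem_rechargeStep_of_mem_rechargeRegion hu)
  exact hsub ⟨e, he, h⟩

theorem Arena.rechargeRegion_subset_of_reset {C : ℕ}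
    (h : ∀ v, (v, (c : ℤ)) ∈ A.rechargeRegion w c → (v, (C : ℤ)) ∈ A.rechargeRegion w c) :
    A.rechargeRegion w c ⊆ A.rechargeRegion w C := by
  refine Arena.subset_rechargeRegion fun ⟨u, e⟩ hu => ?_
  refine A.mem_rechargeStep_of_moves w (A.nonneg_of_mem_rechargeRegion hu) (fun v _ hv => ?_)
    (A.mem_rechargeStep_of_mem_rechargeRegion hu)
  unfold nextEnergy at hv ⊢
  split at hv
  · exact h v hv
  · exact hv

variable (A w c)

noncomputable def Arena.minEnergy (v : V) : ℕ :=
  sInf {n : ℕ | (v, (n : ℤ)) ∈ A.rechargeRegion w c}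

variable {A w c}

theorem Arena.toNat_mem_of_mem_rechargeRegion {v : V} {e : ℤ}
    (h : (v, e) ∈ A.rechargeRegion w c) :
    e.toNat ∈ {n : ℕ | (v, (n : ℤ)) ∈ A.rechargeRegion w c} := by
  rwa [Set.mem_ofPred_eq, Int.toNat_of_nonneg (A.nonneg_of_mem_rechargeRegion h)]

theorem Arena.minEnergy_mem {v : V} {e : ℤ} (h : (v, e) ∈ A.rechargeRegion w c) :
    (v, (A.minEnergy w c v : ℤ)) ∈ A.rechargeRegion w c :=
  Nat.sInf_mem ⟨_, A.toNat_mem_of_mem_rechargeRegion h⟩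

theorem Arena.minEnergy_le {v : V} {e : ℤ} (h : (v, e) ∈ A.rechargeRegion w c) :
    (A.minEnergy w c v : ℤ) ≤ e := by
  have hle : A.minEnergy w c v ≤ e.toNat := Nat.sInf_le (A.toNat_mem_of_mem_rechargeRegion h)
  have := A.nonneg_of_mem_rechargeRegion h
  omega

end RechargeRegion

section CapacityBound

variable {V : Type} {A : Arena V} {w : V → V → Option ℤ} {c W : ℕ}

/-- With no minimal energy in the gap `[ℓ - W, ℓ)`, a step of weight `≥ -W` from energy `≥ ℓ`
never lands exactly on a minimal energy below `ℓ`, so every position of energy `≥ ℓ` could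
afford one unit less. -/
theorem Arena.minEnergy_lt_of_gap
    (hW : ∀ u v, A.E u v → ∀ k : ℤ, w u v = some k → -(W : ℤ) ≤ k) {ℓ : ℕ} (hℓ : 0 < ℓ)
    (hgap : ∀ v e, (v, e) ∈ A.rechargeRegion w c →
      A.minEnergy w c v < ℓ → A.minEnergy w c v + W < ℓ)
    {u : V} {e : ℤ} (hu : (u, e) ∈ A.rechargeRegion w c) : A.minEnergy w c u < ℓ := by
  set R := A.rechargeRegion w c
  have hsub : R ∪ {p | (ℓ : ℤ) ≤ p.2 + 1 ∧ (p.1, p.2 + 1) ∈ R} ⊆ R := by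
    refine Arena.subset_rechargeRegion ?_
    rintro ⟨x, b⟩ (hx | ⟨hℓb, hx⟩)
    · exact A.mem_rechargeStep_of_moves w (A.nonneg_of_mem_rechargeRegion hx)
        (fun _ _ hv => Or.inl hv) (A.mem_rechargeStep_of_mem_rechargeRegion hx)
    refine A.mem_rechargeStep_of_moves w (by omega) (fun v hE hv => ?_)
      (A.mem_rechargeStep_of_mem_rechargeRegion hx)
    unfold nextEnergy at hv ⊢
    split at hv
    · exact Or.inl hv
    · rename_i k hk
      by_cases hlarge : (ℓ : ℤ) ≤ b + k + 1
      · exact Or.inr ⟨hlarge, by rwa [add_right_comm]⟩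
      · have hlow := A.minEnergy_le hv
        have hW' := hW x v hE k hk
        have := hgap v _ hv (by omega)
        exact Or.inl (A.mem_rechargeRegion_of_le (A.minEnergy_mem hv) (by omega))
  by_contra! hle
  have hmem : (u, (A.minEnergy w c u : ℤ) - 1) ∈ R :=
    hsub (Or.inr ⟨by omega, by simpa using A.minEnergy_mem hu⟩)
  have := A.minEnergy_le hmem
  omega

theorem Arena.minEnergy_le_card_sub_one_mul [Fintype V]
    (hW : ∀ u v, A.E u v → ∀ k : ℤ, w u v = some k → -(W : ℤ) ≤ k)
    {u : V} {e : ℤ} (hu : (u, e) ∈ A.rechargeRegion w c) :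
    A.minEnergy w c u ≤ (Fintype.card V - 1) * W := by
  classical
  set S := (Finset.univ.filter fun v => ∃ e, (v, e) ∈ A.rechargeRegion w c).image
    (A.minEnergy w c)
  have hmemS : ∀ v e, (v, e) ∈ A.rechargeRegion w c → A.minEnergy w c v ∈ S := fun v e hv =>
    Finset.mem_image_of_mem _ (Finset.mem_filter.mpr ⟨Finset.mem_univ v, e, hv⟩)
  have hgaps : ∀ ℓ ∈ S, 0 < ℓ → ∃ ℓ' ∈ S, ℓ' < ℓ ∧ ℓ ≤ ℓ' + W := by
    intro ℓ hℓS hℓ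
    by_contra! hno
    obtain ⟨v, hv, rfl⟩ := Finset.mem_image.mp hℓS
    obtain ⟨e, hv⟩ := (Finset.mem_filter.mp hv).2
    have := A.minEnergy_lt_of_gap hW hℓ
      (fun v' e' hv' hlt => hno _ (hmemS v' e' hv') hlt) hv
    omega
  have hcard : S.card ≤ Fintype.card V :=
    Finset.card_image_le.trans ((Finset.card_filter_le _ _).trans_eq Finset.card_univ)
  calc A.minEnergy w c u ≤ W * (S.card - 1) := Finset.le_mul_card_sub_one_of_gaps_le hgaps
        (hmemS u e hu)
    _ ≤ (Fintype.card V - 1) * W := by rw [mul_comm]; exact Nat.mul_le_mul_right W (by omega)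

theorem Arena.mem_rechargeRegion_of_card_sub_one_mul_le [Fintype V]
    (hW : ∀ u v, A.E u v → ∀ k : ℤ, w u v = some k → -(W : ℤ) ≤ k) {C : ℕ}
    (hC : (Fintype.card V - 1) * W ≤ C) {v : V} {e : ℤ} (hv : (v, e) ∈ A.rechargeRegion w c) :
    (v, (C : ℤ)) ∈ A.rechargeRegion w c :=
  A.mem_rechargeRegion_of_le (A.minEnergy_mem hv)
    (by have := A.minEnergy_le_card_sub_one_mul hW hv; omega)

theorem Arena.rechargeRegion_subset_of_card_sub_one_mul_le [Fintype V]
    (hW : ∀ u v, A.E u v → ∀ k : ℤ, w u v = some k → -(W : ℤ) ≤ k) {C : ℕ}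
    (hC : (Fintype.card V - 1) * W ≤ C) : A.rechargeRegion w c ⊆ A.rechargeRegion w C :=
  Arena.rechargeRegion_subset_of_reset fun _ => A.mem_rechargeRegion_of_card_sub_one_mul_le hW hC

end CapacityBound

section Strategies

variable {V : Type} (A : Arena V) (w : V → V → Option ℤ) (c : ℕ)

open Classical in
/-- A move that is safe from the minimal energy level is safe from every higher level, so
this positional choice suffices. -/
noncomputable def Arena.rechargeStrategy (u : V) : V :=
  if h : ∃ v, A.E u v ∧ (v, nextEnergy w c u v (A.minEnergy w c u)) ∈ A.rechargeRegion w c then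
    h.choose
  else (A.succ u).choose

theorem Arena.rechargeStrategy_edge (u : V) : A.E u (A.rechargeStrategy w c u) := by
  unfold Arena.rechargeStrategy
  split_ifs with h
  exacts [h.choose_spec.1, (A.succ u).choose_spec]

variable {A w c}

theorem Arena.mem_rechargeRegion_of_move {u v : V} {e : ℤ} (hu : (u, e) ∈ A.rechargeRegion w c)
    (hE : A.E u v) (hmove : u ∈ A.V0 → v = A.rechargeStrategy w c u) :
    (v, nextEnergy w c u v e) ∈ A.rechargeRegion w c := by
  by_cases h0 : u ∈ A.V0
  · have hex := (A.mem_rechargeStep_of_mem_rechargeRegion (A.minEnergy_mem hu)).2.1 h0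
    rw [hmove h0, Arena.rechargeStrategy, dif_pos hex]
    exact A.mem_rechargeRegion_of_le hex.choose_spec.2 (nextEnergy_mono w c _ _ (A.minEnergy_le hu))
  · exact (A.mem_rechargeStep_of_mem_rechargeRegion hu).2.2 h0 v hE

theorem Arena.winningStrategy_rechargeStrategy (hI : (A.vI, (c : ℤ)) ∈ A.rechargeRegion w c) :
    A.WinningStrategy A.V0 (Recharge w c) fun l => A.rechargeStrategy w c (l.getLastD A.vI) := by
  refine ⟨fun h v _ => ?_, fun ρ hρ hcons n => ?_⟩
  · dsimp only
    rw [List.getLastD_concat]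
    exact A.rechargeStrategy_edge w c v
  have hreach : ∀ n, (ρ n, ELcap w c ρ n) ∈ A.rechargeRegion w c := by
    intro n
    induction n with
    | zero => rwa [hρ.1]
    | succ n ih =>
      refine A.mem_rechargeRegion_of_move ih (hρ.2 n) fun hn => ?_
      rw [hcons n hn]
      exact congrArg _ (prefixList_getLastD ρ n A.vI)
  exact A.nonneg_of_mem_rechargeRegion (hreach n)

theorem Arena.mem_rechargeRegion_of_winningStrategy {σ : List V → V}
    (hσ : A.WinningStrategy A.V0 (Recharge w c) σ) : (A.vI, (c : ℤ)) ∈ A.rechargeRegion w c := by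
  set P := {p | ∃ ρ n, A.Play ρ ∧ A.ConsistentWith A.V0 σ ρ ∧ p = (ρ n, ELcap w c ρ n)}
  have hP : P ⊆ A.rechargeStep w c P := by
    rintro _ ⟨ρ, n, hρ, hcons, rfl⟩
    refine ⟨hσ.2 ρ hρ hcons n, fun _ => ⟨ρ (n + 1), hρ.2 n, ρ, n + 1, hρ, hcons, rfl⟩,
      fun hn v hv => ?_⟩
    obtain ⟨ρ', hρ', hcons', hagree, rfl⟩ := A.exists_consistent_deviation σ hσ.1 hρ hcons hn hv
    refine ⟨ρ', n + 1, hρ', hcons', ?_⟩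
    rw [ELcap_succ, hagree n le_rfl, ELcap_congr w c fun i hi => hagree i hi]
  obtain ⟨ρ, hρ, hcons⟩ := A.exists_consistent_play σ hσ.1
  exact Arena.subset_rechargeRegion hP ⟨ρ, 0, hρ, hcons, by rw [hρ.1]; rfl⟩

end Strategies

theorem recharge_cap_bound_general {V : Type} [Fintype V] (A : Arena V)
    (w : V → V → Option ℤ) (W : ℕ)
    (hW : ∀ u v, A.E u v → ∀ k : ℤ, w u v = some k → -(W : ℤ) ≤ k)
    (h : ∃ cap : ℕ, A.Player0Wins (Recharge w cap)) :
    ∃ σ : List V → V,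
      A.WinningStrategy A.V0 (Recharge w (3 * (Fintype.card V - 1) * W)) σ ∧
      A.FiniteStateOfSize 3 σ := by
  obtain ⟨cap, σ, hσ⟩ := h
  have hC : (Fintype.card V - 1) * W ≤ 3 * (Fintype.card V - 1) * W := by
    rw [mul_assoc]
    exact Nat.le_mul_of_pos_left _ (by norm_num)
  have hI := A.rechargeRegion_subset_of_card_sub_one_mul_le hW hC
    (A.mem_rechargeRegion_of_card_sub_one_mul_le hW hC (A.mem_rechargeRegion_of_winningStrategy hσ))
  exact ⟨_, A.winningStrategy_rechargeStrategy hI,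
    A.finiteStateOfSize_of_positional (positional_comp_getLastD _ _) 2⟩

/-- If Player 0 wins the recharge game for some capacity, then she
wins it for capacity `3·(n-1)·W`, with a finite-state winning strategy of size
three. -/
theorem recharge_cap_bound {V : Type} [Fintype V] (A : Arena V)
    (w : V → V → Option ℤ) (W : ℕ)
    (hneg : RechargeWeights A w)
    (hW : ∀ u v, A.E u v → ∀ k : ℤ, w u v = some k → -(W : ℤ) ≤ k)
    (h : ∃ cap : ℕ, A.Player0Wins (Recharge w cap)) :
    ∃ σ : List V → V,
      A.WinningStrategy A.V0 (Recharge w (3 * (Fintype.card V - 1) * W)) σ ∧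
      A.FiniteStateOfSize 3 σ :=
  recharge_cap_bound_general A w W hW h
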